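/- Let d ≥ 2 be an integer. The supremum, over all matrices E indexed by Fin d × Fin d such that E, 1 − E, E^Γ and (1 − E)^Γ are all positive semidefinite, of Re(Tr(E · (α_d − σ_d))) equals 2/(d+1); that is, the optimal single-copy bias for discriminating σ_d from α_d with equal priors under PPT measurements is 2/(d+1). -/

import Mathlib

open Matrix Finset
open scoped BigOperators Kronecker ComplexOrder

noncomputable section

/-- The flip (swap) operator on `ℂ^d ⊗ ℂ^d`. -/
def Flip (d : ℕ) : Matrix (Fin d × Fin d) (Fin d × Fin d) ℂ :=
  Matrix.of fun p q => if p.1 = q.2 ∧ p.2 = q.1 then 1 else 0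

/-- Projection onto the symmetric subspace, `Π_s = (1 + F)/2`. -/
def projSym (d : ℕ) : Matrix (Fin d × Fin d) (Fin d × Fin d) ℂ :=
  (2 : ℂ)⁻¹ • (1 + Flip d)

/-- Projection onto the antisymmetric subspace, `Π_a = (1 - F)/2`. -/
def projAsym (d : ℕ) : Matrix (Fin d × Fin d) (Fin d × Fin d) ℂ :=
  (2 : ℂ)⁻¹ • (1 - Flip d)

/-- The symmetric Werner state `σ_d = (2/(d(d+1))) • Π_s`. -/
def wernerSym (d : ℕ) : Matrix (Fin d × Fin d) (Fin d × Fin d) ℂ :=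
  (2 / ((d : ℂ) * ((d : ℂ) + 1))) • projSym d

/-- The antisymmetric Werner state `α_d = (2/(d(d-1))) • Π_a`. -/
def wernerAsym (d : ℕ) : Matrix (Fin d × Fin d) (Fin d × Fin d) ℂ :=
  (2 / ((d : ℂ) * ((d : ℂ) - 1))) • projAsym d

/-- The POVM element `G_d`: diagonal, with `(i,j),(i,j)` entry `1` iff `i ≠ j`. -/
def Gmat (d : ℕ) : Matrix (Fin d × Fin d) (Fin d × Fin d) ℂ :=
  Matrix.diagonal fun p => if p.1 ≠ p.2 then 1 else 0

/-- `n`-fold tensor power of a matrix on `ℂ^d ⊗ ℂ^d`. -/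
def tpow {d : ℕ} (n : ℕ) (X : Matrix (Fin d × Fin d) (Fin d × Fin d) ℂ) :
    Matrix (Fin n → Fin d × Fin d) (Fin n → Fin d × Fin d) ℂ :=
  Matrix.of fun f g => ∏ m, X (f m) (g m)

/-- The twirled single-copy POVM element `M_d = ((d-1)/(d+1)) • Π_s + Π_a`. -/
def MdMat (d : ℕ) : Matrix (Fin d × Fin d) (Fin d × Fin d) ℂ :=
  (((d : ℂ) - 1) / ((d : ℂ) + 1)) • projSym d + projAsym d

/-- `A_k`: sum over all `k`-element subsets `S` of the copies of the tensor product with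
`Π_a` on copies in `S` and `Π_s` elsewhere. -/
def Amat (d n k : ℕ) : Matrix (Fin n → Fin d × Fin d) (Fin n → Fin d × Fin d) ℂ :=
  ∑ S ∈ Finset.powersetCard k (Finset.univ : Finset (Fin n)),
    Matrix.of fun f g => ∏ m, (if m ∈ S then projAsym d else projSym d) (f m) (g m)

/-- Partial transpose on `ℂ^d ⊗ ℂ^d`. -/
def pt {d : ℕ} (X : Matrix (Fin d × Fin d) (Fin d × Fin d) ℂ) :
    Matrix (Fin d × Fin d) (Fin d × Fin d) ℂ :=
  Matrix.of fun p q => X (p.1, q.2) (q.1, p.2)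

/-- The maximally entangled state `Φ_d`. -/
def Phi (d : ℕ) : Matrix (Fin d × Fin d) (Fin d × Fin d) ℂ :=
  Matrix.of fun p q => if p.1 = p.2 ∧ q.1 = q.2 then ((d : ℂ))⁻¹ else 0

/-- `n`-copy partial transpose. -/
def ptN {d n : ℕ} (Y : Matrix (Fin n → Fin d × Fin d) (Fin n → Fin d × Fin d) ℂ) :
    Matrix (Fin n → Fin d × Fin d) (Fin n → Fin d × Fin d) ℂ :=
  Matrix.of fun f g => Y (fun m => ((f m).1, (g m).2)) (fun m => ((g m).1, (f m).2))

/-- `T_l`: sum over all `l`-element subsets `S` of the copies of the tensor product with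
`Φ_d` on copies in `S` and `1 - Φ_d` elsewhere. -/
def Tmat (d n l : ℕ) : Matrix (Fin n → Fin d × Fin d) (Fin n → Fin d × Fin d) ℂ :=
  ∑ S ∈ Finset.powersetCard l (Finset.univ : Finset (Fin n)),
    Matrix.of fun f g => ∏ m, (if m ∈ S then Phi d else (1 - Phi d)) (f m) (g m)

/-- The matrix `Q` of the linear program: `Q l k = Σ_{j=0}^{min(l,k)}
(n−l choose k−j)(l choose j)(1−d)^j (1+d)^{l−j}`. -/
def Qmat (n : ℕ) (d : ℝ) (l k : ℕ) : ℝ :=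
  ∑ j ∈ Finset.range (min l k + 1),
    ((n - l).choose (k - j) : ℝ) * (l.choose j : ℝ) * (1 - d) ^ j * (1 + d) ^ (l - j)

/-- A PPT POVM element on the `n`-copy space: `E`, `1 - E`, `E^Γ`, `(1-E)^Γ` all PSD. -/
def IsPPTPovmElem {d n : ℕ}
    (E : Matrix (Fin n → Fin d × Fin d) (Fin n → Fin d × Fin d) ℂ) : Prop :=
  E.PosSemidef ∧ (1 - E).PosSemidef ∧ (ptN E).PosSemidef ∧ (ptN (1 - E)).PosSemidef

/-- Error probability for discriminating `σ_d^{⊗n}` (prior `p`) from `α_d^{⊗n}`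
(prior `1-p`) with the two-outcome POVM `{E, 1 - E}`. -/
def errProb (d n : ℕ) (p : ℝ)
    (E : Matrix (Fin n → Fin d × Fin d) (Fin n → Fin d × Fin d) ℂ) : ℝ :=
  ((p : ℂ) * (E * tpow n (wernerSym d)).trace
    + (1 - (p : ℂ)) * ((1 - E) * tpow n (wernerAsym d)).trace).re

/-- Separability of a bipartite matrix. -/
def IsSep {I J : Type*} [Fintype I] [Fintype J]
    (W : Matrix (I × J) (I × J) ℂ) : Prop :=
  ∃ (m : ℕ) (A : Fin m → Matrix I I ℂ) (B : Fin m → Matrix J J ℂ),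
    (∀ i, (A i).PosSemidef) ∧ (∀ i, (B i).PosSemidef) ∧ W = ∑ i, A i ⊗ₖ B i

/-- Trace norm `‖X‖₁ = Tr √(Xᴴ X)`. -/
def traceNorm {ι : Type*} [Fintype ι] [DecidableEq ι] (X : Matrix ι ι ℂ) : ℝ :=
  ((Matrix.posSemidef_conjTranspose_mul_self X).1.eigenvectorUnitary.1 *
    diagonal ((fun x : ℝ => (x : ℂ)) ∘ (√·) ∘ (Matrix.posSemidef_conjTranspose_mul_self X).1.eigenvalues) *
    (star (Matrix.posSemidef_conjTranspose_mul_self X).1.eigenvectorUnitary :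
      Matrix ι ι ℂ)).trace.re

/-- Frobenius (Hilbert–Schmidt) norm `‖X‖₂ = √(Tr (Xᴴ X))`. -/
def frobNorm {ι : Type*} [Fintype ι] (X : Matrix ι ι ℂ) : ℝ :=
  Real.sqrt ((Xᴴ * X).trace.re)

/-!
Write `α_d - σ_d = a Π_a - b Π_s` with `a = 2/(d(d-1)) > b = 2/(d(d+1))`. Since `F = (d Φ_d)^Γ`,
`Tr(E F) = d Tr(E^Γ Φ_d) ≥ 0` whenever `E^Γ ≥ 0`, i.e. `Tr(E Π_a) ≤ Tr(E Π_s)`; and `1 - E ≥ 0`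
gives `Tr(E Π_a) ≤ Tr Π_a = d(d-1)/2`. Hence `Tr(E (α_d - σ_d)) ≤ (a - b) d(d-1)/2 = 2/(d+1)`.
Equality holds at `M_d = ((d-1)/(d+1)) Π_s + Π_a`: `1 - M_d = (2/(d+1)) Π_s`, and the partial
transposes are `M_d^Γ = (d/(d+1)) (1 - Φ_d)` and `(1 - M_d)^Γ = (1 + d Φ_d)/(d+1)`.
-/

open scoped MatrixOrder in
lemma Matrix.PosSemidef.trace_mul_nonneg {n 𝕜 : Type*} [Fintype n] [DecidableEq n] [RCLike 𝕜]
    {A B : Matrix n n 𝕜} (hA : A.PosSemidef) (hB : B.PosSemidef) : 0 ≤ (A * B).trace := by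
  have hsqrt : (CFC.sqrt B).IsHermitian := (CFC.sqrt_nonneg B).posSemidef.isHermitian
  have hAB : (A * B).trace = (CFC.sqrt B * A * (CFC.sqrt B)ᴴ).trace := by
    rw [hsqrt.eq, trace_mul_cycle, CFC.sqrt_mul_sqrt_self B hB.nonneg, trace_mul_comm]
  exact hAB ▸ (hA.mul_mul_conjTranspose_same _).trace_nonneg

open scoped MatrixOrder in
lemma IsStarProjection.posSemidef {n 𝕜 : Type*} [Fintype n] [DecidableEq n] [RCLike 𝕜]
    {P : Matrix n n 𝕜} (hP : IsStarProjection P) : P.PosSemidef :=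
  Matrix.nonneg_iff_posSemidef.mp hP.nonneg

lemma IsStarProjection.half_one_add {A : Type*} [Ring A] [StarRing A] [Algebra ℂ A]
    [StarModule ℂ A] {F : A} (hF : IsSelfAdjoint F) (hFF : F * F = 1) :
    IsStarProjection ((2 : ℂ)⁻¹ • (1 + F)) := by
  refine ⟨?_, ?_⟩
  · have h : (1 + F) * (1 + F) = (2 : ℂ) • (1 + F) := by
      rw [add_mul, mul_add, mul_add, hFF, two_smul]; noncomm_ring
    rw [IsIdempotentElem, smul_mul_smul_comm, h, smul_smul]
    norm_num
  · exact IsSelfAdjoint.smul (by simp [IsSelfAdjoint]) ((IsSelfAdjoint.one A).add hF)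

variable {d : ℕ}

lemma flip_mul_flip : Flip d * Flip d = 1 := by
  ext ⟨i, j⟩ ⟨k, l⟩
  simp [Flip, mul_apply, Fintype.sum_prod_type, one_apply, ite_and, Prod.ext_iff]

lemma isHermitian_flip : (Flip d).IsHermitian := by
  ext ⟨i, j⟩ ⟨k, l⟩
  by_cases h₁ : i = l <;> by_cases h₂ : j = k <;> simp [Flip, h₁, h₂, eq_comm]

lemma trace_flip : (Flip d).trace = d := by
  simp only [trace, Matrix.diag, Flip, of_apply, Fintype.sum_prod_type]
  simp [eq_comm]

lemma projSym_add_projAsym : projSym d + projAsym d = 1 := by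
  rw [projSym, projAsym, ← smul_add, add_add_sub_cancel, ← two_smul ℂ, smul_smul]
  norm_num

lemma projSym_sub_projAsym : projSym d - projAsym d = Flip d := by
  rw [projSym, projAsym, ← smul_sub, add_sub_sub_cancel, ← two_smul ℂ, smul_smul]
  norm_num

lemma projAsym_eq_one_sub_projSym : projAsym d = 1 - projSym d := by
  rw [← projSym_add_projAsym, add_sub_cancel_left]

lemma isStarProjection_projSym : IsStarProjection (projSym d) :=
  .half_one_add isHermitian_flip flip_mul_flip

lemma isStarProjection_projAsym : IsStarProjection (projAsym d) :=
  projAsym_eq_one_sub_projSym ▸ isStarProjection_projSym.one_sub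

lemma projSym_mul_projAsym : projSym d * projAsym d = 0 :=
  projAsym_eq_one_sub_projSym ▸ isStarProjection_projSym.mul_one_sub_self

lemma trace_projSym : (projSym d).trace = ((d * (d + 1) / 2 : ℝ) : ℂ) := by
  rw [projSym, trace_smul, trace_add, trace_one, trace_flip, Fintype.card_prod,
    Fintype.card_fin, smul_eq_mul]
  push_cast; ring

lemma trace_projAsym : (projAsym d).trace = ((d * (d - 1) / 2 : ℝ) : ℂ) := by
  rw [projAsym, trace_smul, trace_sub, trace_one, trace_flip, Fintype.card_prod,
    Fintype.card_fin, smul_eq_mul]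
  push_cast; ring

@[simp] lemma pt_add (X Y : Matrix (Fin d × Fin d) (Fin d × Fin d) ℂ) :
    pt (X + Y) = pt X + pt Y := rfl

@[simp] lemma pt_sub (X Y : Matrix (Fin d × Fin d) (Fin d × Fin d) ℂ) :
    pt (X - Y) = pt X - pt Y := rfl

@[simp] lemma pt_smul (c : ℂ) (X : Matrix (Fin d × Fin d) (Fin d × Fin d) ℂ) :
    pt (c • X) = c • pt X := rfl

@[simp] lemma pt_one : pt (1 : Matrix (Fin d × Fin d) (Fin d × Fin d) ℂ) = 1 := by
  ext ⟨i, j⟩ ⟨k, l⟩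
  simp only [pt, of_apply, one_apply, Prod.mk.injEq, eq_comm (a := l)]

lemma pt_flip : pt (Flip d) = (d : ℂ) • Phi d := by
  ext ⟨i, j⟩ ⟨k, l⟩
  have hd : (d : ℂ) ≠ 0 := Nat.cast_ne_zero.mpr (Fin.pos i).ne'
  by_cases h₁ : i = j <;> by_cases h₂ : k = l <;> simp [pt, Flip, Phi, h₁, h₂, eq_comm, hd]

lemma flip_eq_pt_phi : Flip d = pt ((d : ℂ) • Phi d) := by
  rw [← pt_flip]; rfl

lemma trace_mul_pt (A B : Matrix (Fin d × Fin d) (Fin d × Fin d) ℂ) :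
    (A * pt B).trace = (pt A * B).trace := by
  let swap : (Fin d × Fin d) × (Fin d × Fin d) ≃ (Fin d × Fin d) × (Fin d × Fin d) :=
    Function.Involutive.toPerm (fun pq => ((pq.1.1, pq.2.2), (pq.2.1, pq.1.2))) fun _ => rfl
  simp only [trace, Matrix.diag, mul_apply, ← Finset.sum_product', Finset.univ_product_univ]
  exact (swap.sum_comp _).symm

lemma isStarProjection_phi : IsStarProjection (Phi d) := by
  refine ⟨?_, ?_⟩
  · ext ⟨i, j⟩ ⟨k, l⟩
    have hd : (d : ℂ) ≠ 0 := Nat.cast_ne_zero.mpr (Fin.pos i).ne'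
    by_cases h₁ : i = j <;> by_cases h₂ : k = l <;>
      simp [Phi, mul_apply, Fintype.sum_prod_type, h₁, h₂, hd]
  · ext ⟨i, j⟩ ⟨k, l⟩
    by_cases h₁ : i = j <;> by_cases h₂ : k = l <;> simp [Phi, h₁, h₂]

lemma re_trace_mul_wernerAsym_sub_wernerSym (E : Matrix (Fin d × Fin d) (Fin d × Fin d) ℂ) :
    (E * (wernerAsym d - wernerSym d)).trace.re =
      2 / (d * (d - 1)) * (E * projAsym d).trace.re
        - 2 / (d * (d + 1)) * (E * projSym d).trace.re := by
  have hsmul (r : ℝ) (P : Matrix (Fin d × Fin d) (Fin d × Fin d) ℂ) :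
      (E * ((r : ℂ) • P)).trace.re = r * (E * P).trace.re := by
    rw [Matrix.mul_smul, trace_smul, smul_eq_mul, Complex.re_ofReal_mul]
  have hα : wernerAsym d = ((2 / (d * (d - 1)) : ℝ) : ℂ) • projAsym d := by
    rw [wernerAsym]; push_cast; rfl
  have hσ : wernerSym d = ((2 / (d * (d + 1)) : ℝ) : ℂ) • projSym d := by
    rw [wernerSym]; push_cast; rfl
  rw [mul_sub, trace_sub, Complex.sub_re, hα, hσ, hsmul, hsmul]

lemma re_trace_mul_projAsym_le_re_trace_mul_projSym
    {E : Matrix (Fin d × Fin d) (Fin d × Fin d) ℂ} (hE : (pt E).PosSemidef) :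
    (E * projAsym d).trace.re ≤ (E * projSym d).trace.re := by
  have h : 0 ≤ (E * Flip d).trace := by
    rw [flip_eq_pt_phi, trace_mul_pt, Matrix.mul_smul, trace_smul, smul_eq_mul]
    exact mul_nonneg (Nat.cast_nonneg d) (hE.trace_mul_nonneg isStarProjection_phi.posSemidef)
  rw [← projSym_sub_projAsym, mul_sub, trace_sub, sub_nonneg] at h
  exact Complex.re_le_re h

lemma re_trace_mul_projAsym_le {E : Matrix (Fin d × Fin d) (Fin d × Fin d) ℂ}
    (hE : (1 - E).PosSemidef) : (E * projAsym d).trace.re ≤ d * (d - 1) / 2 := by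
  have h := hE.trace_mul_nonneg isStarProjection_projAsym.posSemidef
  rw [sub_mul, one_mul, trace_sub, trace_projAsym, sub_nonneg] at h
  simpa using Complex.re_le_re h

theorem re_trace_mul_wernerAsym_sub_wernerSym_le (hd : 2 ≤ d)
    {E : Matrix (Fin d × Fin d) (Fin d × Fin d) ℂ} (h1E : (1 - E).PosSemidef)
    (hptE : (pt E).PosSemidef) :
    (E * (wernerAsym d - wernerSym d)).trace.re ≤ 2 / (d + 1) := by
  have hdR : (2 : ℝ) ≤ d := by exact_mod_cast hd
  have hab : 2 / (d * (d + 1)) ≤ 2 / ((d : ℝ) * (d - 1)) := by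
    gcongr
    · nlinarith
    · linarith
  rw [re_trace_mul_wernerAsym_sub_wernerSym]
  calc _ ≤ (2 / (d * (d - 1)) - 2 / (d * (d + 1))) * (E * projAsym d).trace.re := by
        rw [sub_mul, sub_le_sub_iff_left]
        exact mul_le_mul_of_nonneg_left (re_trace_mul_projAsym_le_re_trace_mul_projSym hptE)
          (by positivity)
    _ ≤ (2 / (d * (d - 1)) - 2 / (d * (d + 1))) * (d * (d - 1) / 2) :=
        mul_le_mul_of_nonneg_left (re_trace_mul_projAsym_le h1E) (sub_nonneg.mpr hab)
    _ = 2 / (d + 1) := by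
        have : (d : ℝ) - 1 ≠ 0 := by linarith
        field_simp
        ring

lemma pt_projSym : pt (projSym d) = (2 : ℂ)⁻¹ • (1 + (d : ℂ) • Phi d) := by
  rw [projSym, pt_smul, pt_add, pt_one, pt_flip]

lemma pt_projAsym : pt (projAsym d) = (2 : ℂ)⁻¹ • (1 - (d : ℂ) • Phi d) := by
  rw [projAsym, pt_smul, pt_sub, pt_one, pt_flip]

lemma mdMat_eq : MdMat d = (((d - 1) / (d + 1) : ℝ) : ℂ) • projSym d + projAsym d := by
  rw [MdMat]; push_cast; rfl

lemma one_sub_mdMat : 1 - MdMat d = ((2 / (d + 1) : ℝ) : ℂ) • projSym d := by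
  have : (d : ℂ) + 1 ≠ 0 := by norm_cast
  rw [mdMat_eq, ← projSym_add_projAsym]
  push_cast
  match_scalars <;> field_simp <;> ring

lemma pt_mdMat : pt (MdMat d) = ((d / (d + 1) : ℝ) : ℂ) • (1 - Phi d) := by
  have : (d : ℂ) + 1 ≠ 0 := by norm_cast
  rw [mdMat_eq, pt_add, pt_smul, pt_projSym, pt_projAsym]
  push_cast
  match_scalars <;> field_simp <;> ring

lemma pt_one_sub_mdMat : pt (1 - MdMat d) = ((1 / (d + 1) : ℝ) : ℂ) • (1 + (d : ℂ) • Phi d) := by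
  have : (d : ℂ) + 1 ≠ 0 := by norm_cast
  rw [one_sub_mdMat, pt_smul, pt_projSym]
  push_cast
  match_scalars <;> field_simp

lemma re_trace_mdMat_mul_wernerAsym_sub_wernerSym (hd : 2 ≤ d) :
    (MdMat d * (wernerAsym d - wernerSym d)).trace.re = 2 / (d + 1) := by
  have hasym : MdMat d * projAsym d = projAsym d := by
    rw [mdMat_eq, add_mul, smul_mul_assoc, projSym_mul_projAsym, smul_zero, zero_add,
      isStarProjection_projAsym.isIdempotentElem.eq]
  have hsym : MdMat d * projSym d = (((d - 1) / (d + 1) : ℝ) : ℂ) • projSym d := by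
    rw [mdMat_eq, add_mul, smul_mul_assoc, isStarProjection_projSym.isIdempotentElem.eq,
      projAsym_eq_one_sub_projSym, isStarProjection_projSym.one_sub_mul_self, add_zero]
  have hdR : (2 : ℝ) ≤ d := by exact_mod_cast hd
  have : (d : ℝ) - 1 ≠ 0 := by linarith
  rw [re_trace_mul_wernerAsym_sub_wernerSym, hasym, hsym, trace_smul, trace_projSym,
    trace_projAsym, smul_eq_mul, ← Complex.ofReal_mul, Complex.ofReal_re, Complex.ofReal_re]
  field_simp
  ring

lemma posSemidef_mdMat (hd : 1 ≤ d) : (MdMat d).PosSemidef := by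
  have : (0 : ℝ) ≤ (d - 1) / (d + 1) := div_nonneg (by simpa using hd) (by positivity)
  exact mdMat_eq ▸ (isStarProjection_projSym.posSemidef.smul (Complex.zero_le_real.mpr this)).add
    isStarProjection_projAsym.posSemidef

lemma posSemidef_one_sub_mdMat : (1 - MdMat d).PosSemidef :=
  one_sub_mdMat ▸
    isStarProjection_projSym.posSemidef.smul (Complex.zero_le_real.mpr (by positivity))

lemma posSemidef_pt_mdMat : (pt (MdMat d)).PosSemidef :=
  pt_mdMat ▸
    isStarProjection_phi.one_sub.posSemidef.smul (Complex.zero_le_real.mpr (by positivity))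

lemma posSemidef_pt_one_sub_mdMat : (pt (1 - MdMat d)).PosSemidef :=
  pt_one_sub_mdMat ▸ (PosSemidef.one.add (isStarProjection_phi.posSemidef.smul
    (Nat.cast_nonneg d))).smul (Complex.zero_le_real.mpr (by positivity))

/-- the optimal single-copy PPT bias for `σ_d` vs `α_d` (equal priors)
is `2/(d+1)`. -/
theorem ppt_single_copy_bias (d : ℕ) (hd : 2 ≤ d) :
    sSup { x : ℝ |
        ∃ E : Matrix (Fin d × Fin d) (Fin d × Fin d) ℂ,
          E.PosSemidef ∧ (1 - E).PosSemidef ∧ (pt E).PosSemidef ∧ (pt (1 - E)).PosSemidef ∧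
          x = ((E * (wernerAsym d - wernerSym d)).trace).re }
      = 2 / ((d : ℝ) + 1) := by
  refine IsGreatest.csSup_eq ⟨⟨MdMat d, posSemidef_mdMat (one_le_two.trans hd),
    posSemidef_one_sub_mdMat, posSemidef_pt_mdMat, posSemidef_pt_one_sub_mdMat,
    (re_trace_mdMat_mul_wernerAsym_sub_wernerSym hd).symm⟩, ?_⟩
  rintro x ⟨E, -, h1E, hptE, -, rfl⟩
  exact re_trace_mul_wernerAsym_sub_wernerSym_le hd h1E hptE

end
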